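/- arXiv:2511.02751 — 5 statements merged into one kernel-verified Lean document; each statement's English description precedes it below -/
import Mathlib

section
/- If the pair (x*, ξ*) satisfies Π(x*, ξ*) = 0, where Π(x, ξ) := sup over z ∈ Ω and ζ ∈ ℝ^r of min_j π_j(x, ξ; z, ζ), then Ax* = b and x* is a weakly Pareto optimal solution of the problem min F(x) subject to Ax = b. -/
open scoped Matrix

lemma stmt5_aux {m : ℕ} (hm : 0 < m) (g : Fin m → ℝ) (h : (⨅ j, g j) ≤ 0) :
    ∃ j, g j ≤ 0 := by
  haveI : Nonempty (Fin m) := Fin.pos_iff_nonempty.mp hm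
  obtain ⟨j₀, hj₀⟩ := Finite.exists_min g
  exact ⟨j₀, (le_ciInf hj₀).trans h⟩

/-- if `Π(x*, ξ*) = 0` then `Ax* = b` and `x*` is weakly Pareto optimal
for `min F(x) s.t. Ax = b`. -/
theorem stmt5 {n r m : ℕ} (hm : 0 < m)
    (A : Matrix (Fin r) (Fin n) ℝ) (b : Fin r → ℝ)
    (hΩ : ∃ z, A.mulVec z = b)
    (f : Fin m → (Fin n → ℝ) → ℝ)
    (hf : ∀ j, Continuous (f j))
    (Q : Fin m → (Fin n → ℝ) → (Fin r → ℝ) → ℝ)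
    (hQ : ∀ j x ξ, Q j x ξ = f j x + ξ ⬝ᵥ (A.mulVec x - b))
    (merit : (Fin n → ℝ) → (Fin r → ℝ) → EReal)
    (hmerit : ∀ x ξ, merit x ξ =
      ⨆ (z : Fin n → ℝ) (_ : A.mulVec z = b) (ζ : Fin r → ℝ),
        ((⨅ j : Fin m, (Q j x ζ - Q j z ξ) : ℝ) : EReal))
    (xs : Fin n → ℝ) (ξs : Fin r → ℝ)
    (hzero : merit xs ξs = 0) :
    A.mulVec xs = b ∧ ¬∃ x, A.mulVec x = b ∧ ∀ j, f j x < f j xs := by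
  haveI : Nonempty (Fin m) := Fin.pos_iff_nonempty.mp hm
  have key : ∀ z, A.mulVec z = b → ∀ ζ : Fin r → ℝ,
      ∃ j, f j xs - f j z + ζ ⬝ᵥ (A.mulVec xs - b) ≤ 0 := by
    intro z hz ζ
    have h1 : ((⨅ j : Fin m, (Q j xs ζ - Q j z ξs) : ℝ) : EReal) ≤ merit xs ξs := by
      rw [hmerit]
      refine le_iSup_of_le z ?_
      refine le_iSup_of_le hz ?_
      exact le_iSup (fun ζ' => (((⨅ j : Fin m, (Q j xs ζ' - Q j z ξs) : ℝ)) : EReal)) ζ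
    rw [hzero] at h1
    have h2 : (⨅ j : Fin m, (Q j xs ζ - Q j z ξs) : ℝ) ≤ 0 := by exact_mod_cast h1
    have h3 : ∀ j, Q j xs ζ - Q j z ξs = f j xs - f j z + ζ ⬝ᵥ (A.mulVec xs - b) := by
      intro j
      rw [hQ, hQ, hz, sub_self, dotProduct_zero]
      ring
    simp only [h3] at h2
    exact stmt5_aux hm _ h2
  obtain ⟨z₀, hz₀⟩ := hΩ
  have hA : A.mulVec xs = b := by
    by_contra hd
    set d := A.mulVec xs - b with hdd
    have hd0 : d ≠ 0 := fun h => hd (by rwa [sub_eq_zero] at h)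
    have hdnn : (0:ℝ) ≤ d ⬝ᵥ d :=
      Finset.sum_nonneg fun i _ => mul_self_nonneg (d i)
    have hdp : 0 < d ⬝ᵥ d := by
      rcases hdnn.lt_or_eq with h | h
      · exact h
      · exact absurd ((dotProduct_self_eq_zero).mp h.symm) hd0
    obtain ⟨j₁, hj₁⟩ := Finite.exists_max (fun j => f j z₀ - f j xs)
    set t := (1 + (f j₁ z₀ - f j₁ xs)) / (d ⬝ᵥ d) with ht
    obtain ⟨j, hj⟩ := key z₀ hz₀ (t • d)
    have hdot : (t • d) ⬝ᵥ d = t * (d ⬝ᵥ d) := smul_dotProduct t d d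
    have ht' : t * (d ⬝ᵥ d) = 1 + (f j₁ z₀ - f j₁ xs) :=
      div_mul_cancel₀ _ hdp.ne'
    rw [hdot, ht'] at hj
    have := hj₁ j
    linarith
  refine ⟨hA, ?_⟩
  rintro ⟨x, hx, hlt⟩
  obtain ⟨j, hj⟩ := key x hx 0
  rw [zero_dotProduct] at hj
  linarith [hlt j]
end

section
/- Let K ⊂ ℝ^n be a bounded set with D := sup{‖x‖ : x ∈ K} < ∞. Suppose each f_j is convex and differentiable with L_j-Lipschitz gradient and b is in the range of A. Then for every x ∈ K, U(x) ≥ -E₁ ‖Ax - b‖ / σ⁺_min(A), where U(x) := sup_{z ∈ Ω} min_j (f_j(x) - f_j(z)), E₂ := (1 + ‖A‖/σ⁺_min(A)) D + ‖b‖/σ⁺_min(A), E₁ := E₂ · max_j L_j + max_j ‖∇f_j(0)‖, and σ⁺_min(A) is the smallest nonzero singular value of A. -/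
open RealInnerProductSpace

/-- lower bound of the objective gap `U` on a bounded set `K`:
`U(x) ≥ -E₁ ‖Ax - b‖ / σ` for `x ∈ K`, where `σ = σ⁺_min(A)` is encoded through
the Moore–Penrose pseudoinverse `A⁺` (with `AA⁺A = A`, `AA⁺b = b`, `‖A⁺‖ ≤ 1/σ`). -/
theorem stmt7 {n r m : ℕ} (hm : 0 < m)
    (A : EuclideanSpace ℝ (Fin n) →L[ℝ] EuclideanSpace ℝ (Fin r))
    (b : EuclideanSpace ℝ (Fin r))
    (Aplus : EuclideanSpace ℝ (Fin r) →L[ℝ] EuclideanSpace ℝ (Fin n))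
    (hpinv : ∀ x, A (Aplus (A x)) = A x) (hpb : A (Aplus b) = b)
    (σ : ℝ) (hσ : 0 < σ) (hAplus : ‖Aplus‖ ≤ 1 / σ)
    (K : Set (EuclideanSpace ℝ (Fin n))) (D : ℝ) (hD : ∀ x ∈ K, ‖x‖ ≤ D)
    (f : Fin m → EuclideanSpace ℝ (Fin n) → ℝ)
    (g : Fin m → EuclideanSpace ℝ (Fin n) → EuclideanSpace ℝ (Fin n))
    (L : Fin m → ℝ) (hL : ∀ j, 0 ≤ L j)
    (hconv : ∀ j x y, f j x + ⟪g j x, y - x⟫ ≤ f j y)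
    (hlip : ∀ j x y, ‖g j x - g j y‖ ≤ L j * ‖x - y‖)
    (U : EuclideanSpace ℝ (Fin n) → EReal)
    (hU : ∀ x, U x =
      ⨆ (z : EuclideanSpace ℝ (Fin n)) (_ : A z = b),
        ((⨅ j : Fin m, (f j x - f j z) : ℝ) : EReal))
    (E₁ E₂ : ℝ)
    (hE₂ : E₂ = (1 + ‖A‖ / σ) * D + ‖b‖ / σ)
    (hE₁ : E₁ = E₂ * (⨆ j, L j) + ⨆ j, ‖g j 0‖) :
    ∀ x ∈ K, ((-(E₁ * ‖A x - b‖ / σ) : ℝ) : EReal) ≤ U x := by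

  intro x hx
  haveI : Nonempty (Fin m) := ⟨⟨0, hm⟩⟩
  set z : EuclideanSpace ℝ (Fin n) := x - Aplus (A x - b) with hzdef
  have hz : A z = b := by
    simp only [hzdef, map_sub, hpinv, hpb]
    abel
  have hDnn : 0 ≤ D := le_trans (norm_nonneg x) (hD x hx)
  have hσ' : (0:ℝ) < 1/σ := by positivity
  have hxz : ‖x - z‖ ≤ (1/σ) * ‖A x - b‖ := by
    have h2 : ‖Aplus (A x - b)‖ ≤ (1/σ) * ‖A x - b‖ := by
      refine le_trans (Aplus.le_opNorm _) ?_
      exact mul_le_mul_of_nonneg_right hAplus (norm_nonneg _)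
    simpa [hzdef] using h2
  have hnz : ‖z‖ ≤ E₂ := by
    have h1 : ‖z‖ ≤ ‖x‖ + ‖x - z‖ := by
      have := norm_add_le x (z - x)
      simpa [norm_sub_rev, sub_eq_add_neg] using norm_sub_le x (x - z) |>.trans_eq (by abel_nf)
    have h3 : ‖A x - b‖ ≤ ‖A‖ * ‖x‖ + ‖b‖ := le_trans (norm_sub_le _ _)
      (by have := A.le_opNorm x; linarith)
    have hxD := hD x hx
    have hAnn : (0:ℝ) ≤ ‖A‖ := norm_nonneg _
    have h4 : (1/σ) * ‖A x - b‖ ≤ (1/σ) * (‖A‖ * D + ‖b‖) := by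
      refine mul_le_mul_of_nonneg_left ?_ (le_of_lt hσ')
      nlinarith [norm_nonneg (A x)]
    rw [hE₂]
    have : (1/σ) * (‖A‖ * D + ‖b‖) = ‖A‖/σ * D + ‖b‖/σ := by ring
    nlinarith [hxz]
  -- bound on gradients at z
  have hbdd : BddAbove (Set.range L) := Set.Finite.bddAbove (Set.finite_range L)
  have hbddg : BddAbove (Set.range fun j => ‖g j 0‖) := Set.Finite.bddAbove (Set.finite_range _)
  have hgz : ∀ j, ‖g j z‖ ≤ E₁ := by
    intro j
    have h1 : ‖g j z‖ ≤ ‖g j z - g j 0‖ + ‖g j 0‖ := by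
      simpa using norm_add_le (g j z - g j 0) (g j 0)
    have h2 : ‖g j z - g j 0‖ ≤ L j * ‖z‖ := by simpa using hlip j z 0
    have hLj : L j ≤ ⨆ j, L j := le_ciSup hbdd j
    have hgj : ‖g j 0‖ ≤ ⨆ j, ‖g j 0‖ := le_ciSup hbddg j
    have hsLnn : 0 ≤ ⨆ j, L j := le_trans (hL j) hLj
    have : L j * ‖z‖ ≤ (⨆ j, L j) * E₂ := by
      have hznn := norm_nonneg z
      nlinarith
    rw [hE₁]
    nlinarith
  have hE₁nn : 0 ≤ E₁ := le_trans (norm_nonneg _) (hgz ⟨0, hm⟩)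
  -- per-coordinate bound
  have key : ∀ j, -(E₁ * ‖A x - b‖ / σ) ≤ f j x - f j z := by
    intro j
    have hc := hconv j z x
    have hip : ⟪g j z, x - z⟫ ≤ f j x - f j z := by linarith
    have habs : -(‖g j z‖ * ‖x - z‖) ≤ ⟪g j z, x - z⟫ := by
      have := abs_real_inner_le_norm (g j z) (x - z)
      have := neg_abs_le (⟪g j z, x - z⟫ : ℝ)
      linarith
    have h5 : ‖g j z‖ * ‖x - z‖ ≤ E₁ * ((1/σ) * ‖A x - b‖) := by
      calc ‖g j z‖ * ‖x - z‖ ≤ E₁ * ‖x - z‖ :=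
            mul_le_mul_of_nonneg_right (hgz j) (norm_nonneg _)
        _ ≤ E₁ * ((1/σ) * ‖A x - b‖) := mul_le_mul_of_nonneg_left hxz hE₁nn
    have h6 : E₁ * ((1/σ) * ‖A x - b‖) = E₁ * ‖A x - b‖ / σ := by ring
    linarith
  have hinf : -(E₁ * ‖A x - b‖ / σ) ≤ ⨅ j : Fin m, (f j x - f j z) :=
    le_ciInf key
  rw [hU x]
  refine le_iSup_of_le z (le_iSup_of_le hz ?_)
  exact_mod_cast EReal.coe_le_coe_iff.mpr hinf
end

section
/- Let C ⊂ ℝ^n be a nonempty closed convex set and u, w, ζ ∈ ℝ^n. If ζ satisfies ζ = u - proj_C(w - ζ), then u - ζ minimizes z ↦ ⟨u - w, z⟩ over C. -/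
open RealInnerProductSpace

/-- if `proj` is the metric projection onto the nonempty closed convex
set `C` (characterized by the variational inequality) and `ζ = u - proj(w - ζ)`, then
`u - ζ` minimizes `z ↦ ⟪u - w, z⟫` over `C`. -/
theorem stmt11 {n : ℕ} (C : Set (EuclideanSpace ℝ (Fin n)))
    (hC : C.Nonempty) (hclosed : IsClosed C) (hconv : Convex ℝ C)
    (proj : EuclideanSpace ℝ (Fin n) → EuclideanSpace ℝ (Fin n))
    (hmem : ∀ y, proj y ∈ C)
    (hchar : ∀ y, ∀ z ∈ C, ⟪y - proj y, z - proj y⟫ ≤ 0)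
    (u w ζ : EuclideanSpace ℝ (Fin n))
    (hζ : ζ = u - proj (w - ζ)) :
    u - ζ ∈ C ∧ ∀ z ∈ C, ⟪u - w, u - ζ⟫ ≤ ⟪u - w, z⟫ := by
  have hp : u - ζ = proj (w - ζ) := by
    conv_lhs => rw [hζ, sub_sub_cancel]
  refine ⟨hp ▸ hmem _, fun z hz => ?_⟩
  have h := hchar (w - ζ) z hz
  rw [← hp] at h
  have : ⟪u - w, z⟫ - ⟪u - w, u - ζ⟫ = -⟪w - ζ - (u - ζ), z - (u - ζ)⟫ := by
    rw [← inner_sub_right]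
    have : w - ζ - (u - ζ) = -(u - w) := by abel
    rw [this, inner_neg_left]; ring
  linarith [this ▸ (neg_nonneg.mpr h)]
end

section
/- Let positive sequences (θ_k), (γ_k), (α_k) satisfy θ_{k+1} = θ_k/(1 + α_k) and γ_{k+1} = (γ_k + μ α_k)/(1 + α_k) with μ ≥ 0, θ_0 > 0, γ_0 > 0, α_k > 0. Then for all k: min{μ, γ_0} ≤ γ_k ≤ max{μ, γ_0} and γ_k ≥ γ_0 θ_k / θ_0. -/
/-- for the parameter recursions `θ_{k+1} = θ_k/(1+α_k)`,
`γ_{k+1} = (γ_k + μα_k)/(1+α_k)`, one has `min{μ,γ₀} ≤ γ_k ≤ max{μ,γ₀}` and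
`γ_k ≥ γ₀ θ_k/θ₀`. -/
theorem stmt12 (θ γ α : ℕ → ℝ) (μ : ℝ) (hμ : 0 ≤ μ)
    (hθ0 : 0 < θ 0) (hγ0 : 0 < γ 0) (hα : ∀ k, 0 < α k)
    (hθ : ∀ k, θ (k + 1) = θ k / (1 + α k))
    (hγ : ∀ k, γ (k + 1) = (γ k + μ * α k) / (1 + α k)) :
    ∀ k, min μ (γ 0) ≤ γ k ∧ γ k ≤ max μ (γ 0) ∧ γ 0 * θ k / θ 0 ≤ γ k := by
  intro k
  induction k with
  | zero =>
    refine ⟨min_le_right _ _, le_max_right _ _, ?_⟩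
    rw [mul_div_assoc, div_self hθ0.ne', mul_one]
  | succ k ih =>
    obtain ⟨h1, h2, h3⟩ := ih
    have hαk := hα k
    have hd : 0 < 1 + α k := by linarith
    refine ⟨?_, ?_, ?_⟩
    · rw [hγ, le_div_iff₀ hd]
      have := min_le_left μ (γ 0)
      nlinarith [mul_le_mul_of_nonneg_right h3 hd.le, mul_nonneg (mul_nonneg hμ hαk.le) hd.le]
    · rw [hγ, div_le_iff₀ hd]
      have := le_max_left μ (γ 0)
      nlinarith [mul_le_mul_of_nonneg_right h3 hd.le, mul_nonneg (mul_nonneg hμ hαk.le) hd.le]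
    · rw [hγ, hθ]
      have e : γ 0 * (θ k / (1 + α k)) / θ 0 = (γ 0 * θ k / θ 0) / (1 + α k) := by
        ring
      rw [e, div_le_div_iff₀ hd hd]
      nlinarith [mul_le_mul_of_nonneg_right h3 hd.le, mul_nonneg (mul_nonneg hμ hαk.le) hd.le]
end

section
/- Let θ_k > 0 satisfy θ_{k+1} = θ_k/(1+α_k) with α_k = √(γ_k θ_k)/√(L θ_k + ‖A‖²), where γ_k ≥ γ_0 θ_k/θ_0 and γ_0, θ_0, L > 0, ‖A‖ ≥ 0. Then for all k ≥ 1: √(L θ_0/γ_0)(θ_k^{-1/2} - θ_k^{1/2} θ_{k+1}^{-1}) + ‖A‖√(θ_0/γ_0)(θ_k^{-1} - θ_{k+1}^{-1}) ≤ -1. -/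
/-- the key per-step inequality for the step size
`α_k = √(γ_k θ_k)/√(L θ_k + ‖A‖²)`:
`√(Lθ₀/γ₀)(θ_k^{-1/2} - θ_k^{1/2}/θ_{k+1}) + ‖A‖√(θ₀/γ₀)(1/θ_k - 1/θ_{k+1}) ≤ -1`. -/
theorem stmt14 (θ γ α : ℕ → ℝ) (L γ0 θ0 normA : ℝ)
    (hL : 0 < L) (hγ0 : 0 < γ0) (hθ0 : 0 < θ0) (hA : 0 ≤ normA)
    (hθinit : θ 0 = θ0) (hγinit : γ 0 = γ0)
    (hθpos : ∀ k, 0 < θ k) (hγpos : ∀ k, 0 < γ k)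
    (hγlow : ∀ k, γ0 * θ k / θ0 ≤ γ k)
    (hα : ∀ k, α k = Real.sqrt (γ k * θ k) / Real.sqrt (L * θ k + normA ^ 2))
    (hθ : ∀ k, θ (k + 1) = θ k / (1 + α k)) :
    ∀ k ≥ 1,
      Real.sqrt (L * θ0 / γ0) * (1 / Real.sqrt (θ k) - Real.sqrt (θ k) / θ (k + 1))
        + normA * Real.sqrt (θ0 / γ0) * (1 / θ k - 1 / θ (k + 1)) ≤ -1 := by
  intro k hk
  have htpos : 0 < θ k := hθpos k
  set t := θ k with ht
  have hst : 0 < Real.sqrt t := Real.sqrt_pos.mpr htpos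
  have hts : Real.sqrt t * Real.sqrt t = t := Real.mul_self_sqrt htpos.le
  have hDpos : 0 < Real.sqrt (L * t + normA ^ 2) := by
    apply Real.sqrt_pos.mpr; nlinarith
  have hαpos : 0 < α k := by
    rw [hα k]
    exact div_pos (Real.sqrt_pos.mpr (mul_pos (hγpos k) htpos)) hDpos
  set C := Real.sqrt (L * θ0 / γ0) / Real.sqrt t + normA * Real.sqrt (θ0 / γ0) / t
    with hC
  have hCnn : 0 ≤ C := by positivity
  -- lower bound on α k
  have hα_lb : Real.sqrt (γ0 / θ0) * t / Real.sqrt (L * t + normA ^ 2) ≤ α k := by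
    rw [hα k, ← ht]
    gcongr
    rw [show Real.sqrt (γ0 / θ0) * t = Real.sqrt (γ0 / θ0 * t ^ 2) by
      rw [Real.sqrt_mul (by positivity), Real.sqrt_sq htpos.le]]
    apply Real.sqrt_le_sqrt
    have hg := hγlow k
    rw [← ht] at hg
    have h5 : γ0 / θ0 * t ^ 2 = γ0 * t / θ0 * t := by ring
    rw [h5]
    exact mul_le_mul_of_nonneg_right hg htpos.le
  -- sqrt algebra
  have e1 : Real.sqrt (γ0 / θ0) * Real.sqrt (L * θ0 / γ0) = Real.sqrt L := by
    rw [← Real.sqrt_mul (by positivity)]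
    congr 1
    field_simp
  have e2 : Real.sqrt (γ0 / θ0) * Real.sqrt (θ0 / γ0) = 1 := by
    rw [← Real.sqrt_mul (by positivity),
      show γ0 / θ0 * (θ0 / γ0) = 1 by field_simp]
    exact Real.sqrt_one
  have htdiv : t / Real.sqrt t = Real.sqrt t := by
    rw [div_eq_iff hst.ne']; exact hts.symm
  have hnum : Real.sqrt (γ0 / θ0) * t * C = Real.sqrt L * Real.sqrt t + normA := by
    have expand : Real.sqrt (γ0 / θ0) * t * C
        = Real.sqrt (γ0 / θ0) * Real.sqrt (L * θ0 / γ0) * (t / Real.sqrt t)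
          + Real.sqrt (γ0 / θ0) * Real.sqrt (θ0 / γ0) * normA * (t / t) := by
      rw [hC]; ring
    rw [expand, e1, e2, htdiv, div_self htpos.ne']; ring
  have hprod : Real.sqrt (γ0 / θ0) * t / Real.sqrt (L * t + normA ^ 2) * C
      = (Real.sqrt L * Real.sqrt t + normA) / Real.sqrt (L * t + normA ^ 2) := by
    rw [div_mul_eq_mul_div, hnum]
  have hD_le : Real.sqrt (L * t + normA ^ 2) ≤ Real.sqrt L * Real.sqrt t + normA := by
    have h1 : Real.sqrt L * Real.sqrt t = Real.sqrt (L * t) := (Real.sqrt_mul hL.le t).symm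
    rw [h1]
    have h2 : L * t + normA ^ 2 ≤ (Real.sqrt (L * t) + normA) ^ 2 := by
      have h3 := Real.sq_sqrt (show (0:ℝ) ≤ L * t by positivity)
      have hsnn : 0 ≤ Real.sqrt (L * t) := Real.sqrt_nonneg _
      nlinarith
    calc Real.sqrt (L * t + normA ^ 2) ≤ Real.sqrt ((Real.sqrt (L * t) + normA) ^ 2) :=
          Real.sqrt_le_sqrt h2
      _ = Real.sqrt (L * t) + normA := Real.sqrt_sq (by positivity)
  have key : 1 ≤ α k * C := by
    calc (1:ℝ) ≤ (Real.sqrt L * Real.sqrt t + normA) / Real.sqrt (L * t + normA ^ 2) :=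
          (one_le_div hDpos).mpr hD_le
      _ = Real.sqrt (γ0 / θ0) * t / Real.sqrt (L * t + normA ^ 2) * C := hprod.symm
      _ ≤ α k * C := mul_le_mul_of_nonneg_right hα_lb hCnn
  -- final computation
  have h1a : 0 < 1 + α k := by linarith
  rw [hθ k, ← ht]
  have e3 : 1 / Real.sqrt t - Real.sqrt t / (t / (1 + α k)) = -(α k / Real.sqrt t) := by
    have h2 : Real.sqrt t / (t / (1 + α k)) = (1 + α k) / Real.sqrt t := by
      rw [div_div_eq_mul_div, div_eq_div_iff htpos.ne' hst.ne']
      linear_combination (1 + α k) * hts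
    rw [h2]; ring
  have e4 : 1 / t - 1 / (t / (1 + α k)) = -(α k / t) := by
    rw [one_div_div]; ring
  rw [e3, e4]
  have heq : Real.sqrt (L * θ0 / γ0) * -(α k / Real.sqrt t)
      + normA * Real.sqrt (θ0 / γ0) * -(α k / t) = -(α k * C) := by
    rw [hC]; ring
  rw [heq]
  linarith
end
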